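/- Suppose (a_n), (b_n) are increasing complementary sequences of positive integers with a_0 = b_0 = 0, a_1 = 1, b is superadditive, b_2 ≥ 2b_1, and b_{m+n} ≥ b_{m+1} + b_n for all m ≥ 1, n ≥ 2. Let G be the invariant game with moves {(a_n,b_n),(b_n,a_n) : n ≥ 1}. Then the P-positions of G⋆ (the game whose moves are the nonzero P-positions of G) are exactly {(a_n,b_n),(b_n,a_n) : n ≥ 0}. -/
import Mathlib


/-- P-positions of the invariant two-pile subtraction game with move set `M`:
a position is P iff every option is an N-position. -/
def PPos2 (M : Set (ℕ × ℕ)) (x : ℕ × ℕ) : Prop :=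
  ∀ r : ℕ × ℕ, r ∈ M → r ≠ (0, 0) → r.1 ≤ x.1 → r.2 ≤ x.2 →
    ¬ PPos2 M (x.1 - r.1, x.2 - r.2)
termination_by x.1 + x.2
decreasing_by
  rename_i h1 h2
  simp only [ne_eq, Prod.ext_iff, not_and_or] at *
  omega

lemma PPos2_iff (M : Set (ℕ × ℕ)) (x : ℕ × ℕ) :
    PPos2 M x ↔ ∀ r : ℕ × ℕ, r ∈ M → r ≠ (0, 0) → r.1 ≤ x.1 → r.2 ≤ x.2 →
      ¬ PPos2 M (x.1 - r.1, x.2 - r.2) := by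
  rw [PPos2]

lemma PPos2_zero (M : Set (ℕ × ℕ)) : PPos2 M (0, 0) := by
  rw [PPos2_iff]
  intro r _ hne h1 h2
  exact absurd (Prod.ext (by simpa using h1) (by simpa using h2)) hne



open scoped Classical in
noncomputable def cnt (f : ℕ → ℕ) (x : ℕ) : ℕ :=
  ((Finset.Icc 1 x).filter (fun v => ∃ m, 1 ≤ m ∧ f m = v)).card

lemma le_cnt_iff (f : ℕ → ℕ) (hmono : ∀ m n, 1 ≤ m → m < n → f m < f n)
    (hpos : ∀ m, 1 ≤ m → 1 ≤ f m) (t x : ℕ) (ht : 1 ≤ t) :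
    f t ≤ x ↔ t ≤ cnt f x := by
  classical
  have hmono' : ∀ m n, 1 ≤ m → m ≤ n → f m ≤ f n := by
    intro m n h1 h2
    rcases eq_or_lt_of_le h2 with h | h
    · exact h ▸ le_rfl
    · exact (hmono m n h1 h).le
  constructor
  · intro h
    have hsub : (Finset.Icc 1 t).image f ⊆
        (Finset.Icc 1 x).filter (fun v => ∃ m, 1 ≤ m ∧ f m = v) := by
      intro v hv
      simp only [Finset.mem_image, Finset.mem_Icc] at hv
      obtain ⟨m, ⟨hm1, hm2⟩, rfl⟩ := hv
      simp only [Finset.mem_filter, Finset.mem_Icc]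
      exact ⟨⟨hpos m hm1, le_trans (hmono' m t hm1 hm2) h⟩, m, hm1, rfl⟩
    have hinj : Set.InjOn f (Finset.Icc 1 t) := by
      intro u hu v hv huv
      simp only [Finset.coe_Icc, Set.mem_Icc] at hu hv
      by_contra hne
      rcases lt_or_gt_of_ne hne with hlt | hlt
      · exact absurd huv (hmono u v hu.1 hlt).ne
      · exact absurd huv.symm (hmono v u hv.1 hlt).ne
    calc t = ((Finset.Icc 1 t).image f).card := by
              rw [Finset.card_image_of_injOn hinj, Nat.card_Icc]; omega
      _ ≤ _ := Finset.card_le_card hsub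
  · intro h
    by_contra hc
    push_neg at hc
    have hsub : (Finset.Icc 1 x).filter (fun v => ∃ m, 1 ≤ m ∧ f m = v) ⊆
        (Finset.Icc 1 (t - 1)).image f := by
      intro v hv
      simp only [Finset.mem_filter, Finset.mem_Icc] at hv
      obtain ⟨⟨_, hvx⟩, m, hm1, rfl⟩ := hv
      simp only [Finset.mem_image, Finset.mem_Icc]
      refine ⟨m, ⟨hm1, ?_⟩, rfl⟩
      by_contra hmt
      exact absurd (le_trans (hmono' t m ht (by omega)) hvx) (by omega)
    have := Finset.card_le_card hsub
    have hc2 := Finset.card_image_le (s := Finset.Icc 1 (t-1)) (f := f)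
    rw [Nat.card_Icc] at hc2
    unfold cnt at h
    omega

lemma cnt_mono (f : ℕ → ℕ) {x y : ℕ} (h : x ≤ y) : cnt f x ≤ cnt f y := by
  classical
  exact Finset.card_le_card (Finset.filter_subset_filter _ (Finset.Icc_subset_Icc_right h))

lemma cnt_partition (a b : ℕ → ℕ)
    (hcomp : ∀ k : ℕ, 1 ≤ k → ((∃ n, 1 ≤ n ∧ a n = k) ↔ ¬ ∃ n, 1 ≤ n ∧ b n = k))
    (x : ℕ) : cnt a x + cnt b x = x := by
  classical
  unfold cnt
  have hcard : (Finset.Icc 1 x).card = x := by rw [Nat.card_Icc]; omega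
  have heq : (Finset.Icc 1 x).filter (fun v => ∃ m, 1 ≤ m ∧ b m = v)
      = (Finset.Icc 1 x).filter (fun v => ¬ ∃ m, 1 ≤ m ∧ a m = v) := by
    apply Finset.filter_congr
    intro v hv
    simp only [Finset.mem_Icc] at hv
    constructor
    · intro hb ha
      exact (hcomp v hv.1).mp ha hb
    · intro ha
      by_contra hb
      exact ha ((hcomp v hv.1).mpr hb)
  rw [heq, Finset.card_filter_add_card_filter_not, hcard]



section Aux

variable {a b : ℕ → ℕ}

-- b is at least 2n
lemma hb_one (ha1 : a 1 = 1) (hbpos : ∀ n, 1 ≤ n → 1 ≤ b n)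
    (hcomp : ∀ k : ℕ, 1 ≤ k → ((∃ n, 1 ≤ n ∧ a n = k) ↔ ¬ ∃ n, 1 ≤ n ∧ b n = k)) :
    2 ≤ b 1 := by
  have h1 := (hcomp 1 le_rfl).mp ⟨1, le_rfl, ha1⟩
  have := hbpos 1 le_rfl
  rcases Nat.lt_or_ge (b 1) 2 with h | h
  · exact absurd ⟨1, le_rfl, by omega⟩ h1
  · exact h

lemma hb_lin (ha1 : a 1 = 1) (hbpos : ∀ n, 1 ≤ n → 1 ≤ b n)
    (hcomp : ∀ k : ℕ, 1 ≤ k → ((∃ n, 1 ≤ n ∧ a n = k) ↔ ¬ ∃ n, 1 ≤ n ∧ b n = k))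
    (hsup : ∀ m n : ℕ, b m + b n ≤ b (m + n)) :
    ∀ n, 1 ≤ n → 2 * n ≤ b n := by
  have h1 := hb_one ha1 hbpos hcomp
  intro n hn
  induction n with
  | zero => omega
  | succ k ih =>
    rcases Nat.eq_zero_or_pos k with rfl | hk'
    · simpa using h1
    · have hk := ih hk'
      have := hsup k 1
      omega

-- every positive integer is an a-value or a b-value
lemma val_class (hcomp : ∀ k : ℕ, 1 ≤ k → ((∃ n, 1 ≤ n ∧ a n = k) ↔ ¬ ∃ n, 1 ≤ n ∧ b n = k))
    (v : ℕ) (hv : 1 ≤ v) : (∃ n, 1 ≤ n ∧ a n = v) ∨ (∃ n, 1 ≤ n ∧ b n = v) := by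
  by_cases h : ∃ n, 1 ≤ n ∧ b n = v
  · exact Or.inr h
  · exact Or.inl ((hcomp v hv).mpr h)

-- gap lemma : a (n+1) ≤ a n + 2
lemma a_gap (ha1 : a 1 = 1) (hainc : StrictMono a)
    (hbpos : ∀ n, 1 ≤ n → 1 ≤ b n)
    (hbinc : ∀ m n, 1 ≤ m → m < n → b m < b n)
    (hcomp : ∀ k : ℕ, 1 ≤ k → ((∃ n, 1 ≤ n ∧ a n = k) ↔ ¬ ∃ n, 1 ≤ n ∧ b n = k))
    (hsup : ∀ m n : ℕ, b m + b n ≤ b (m + n)) :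
    ∀ n, 1 ≤ n → a (n + 1) ≤ a n + 2 := by
  intro n hn
  have hb1 := hb_one ha1 hbpos hcomp
  have ha_pos : 1 ≤ a n := by
    have : a 1 ≤ a n := hainc.monotone hn
    omega
  have key : ∀ t, 1 ≤ t → a t = a n + 1 ∨ a t = a n + 2 → a (n+1) ≤ a n + 2 := by
    intro t _ ht
    have htn : n < t := by
      by_contra hc
      have : a t ≤ a n := hainc.monotone (by omega)
      omega
    have : a (n+1) ≤ a t := hainc.monotone (by omega)
    omega
  rcases val_class hcomp (a n + 1) (by omega) with ⟨t, ht1, ht2⟩ | ⟨i, hi1, hi2⟩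
  · exact key t ht1 (Or.inl ht2)
  · rcases val_class hcomp (a n + 2) (by omega) with ⟨t, ht1, ht2⟩ | ⟨j, hj1, hj2⟩
    · exact key t ht1 (Or.inr ht2)
    · -- two consecutive b-values: contradiction
      exfalso
      have hij : i < j := by
        rcases Nat.lt_trichotomy i j with h | h | h
        · exact h
        · subst h; omega
        · have := hbinc j i hj1 h; omega
      have h1 : b (i+1) ≤ b j := by
        rcases Nat.eq_or_lt_of_le (Nat.succ_le_of_lt hij) with h | h
        · exact h ▸ le_rfl
        · exact (hbinc (i+1) j (by omega) h).le
      have := hsup i 1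
      omega

lemma a_ub (ha1 : a 1 = 1) (hainc : StrictMono a)
    (hbpos : ∀ n, 1 ≤ n → 1 ≤ b n)
    (hbinc : ∀ m n, 1 ≤ m → m < n → b m < b n)
    (hcomp : ∀ k : ℕ, 1 ≤ k → ((∃ n, 1 ≤ n ∧ a n = k) ↔ ¬ ∃ n, 1 ≤ n ∧ b n = k))
    (hsup : ∀ m n : ℕ, b m + b n ≤ b (m + n)) :
    ∀ n, 1 ≤ n → a n ≤ 2 * n - 1 := by
  intro n hn
  induction n with
  | zero => omega
  | succ k ih =>
    rcases Nat.eq_or_lt_of_le hn with h | h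
    · simp [← h, ha1]
    · have hk := ih (by omega)
      have := a_gap ha1 hainc hbpos hbinc hcomp hsup k (by omega)
      omega

lemma a_lt_b (ha1 : a 1 = 1) (hainc : StrictMono a)
    (hbpos : ∀ n, 1 ≤ n → 1 ≤ b n)
    (hbinc : ∀ m n, 1 ≤ m → m < n → b m < b n)
    (hcomp : ∀ k : ℕ, 1 ≤ k → ((∃ n, 1 ≤ n ∧ a n = k) ↔ ¬ ∃ n, 1 ≤ n ∧ b n = k))
    (hsup : ∀ m n : ℕ, b m + b n ≤ b (m + n)) :
    ∀ n, 1 ≤ n → a n < b n := by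
  intro n hn
  have h1 := a_ub ha1 hainc hbpos hbinc hcomp hsup n hn
  have h2 := hb_lin ha1 hbpos hcomp hsup n hn
  omega

lemma a_add_le (ha1 : a 1 = 1) (hainc : StrictMono a)
    (hbpos : ∀ n, 1 ≤ n → 1 ≤ b n)
    (hbinc : ∀ m n, 1 ≤ m → m < n → b m < b n)
    (hcomp : ∀ k : ℕ, 1 ≤ k → ((∃ n, 1 ≤ n ∧ a n = k) ↔ ¬ ∃ n, 1 ≤ n ∧ b n = k))
    (hsup : ∀ m n : ℕ, b m + b n ≤ b (m + n)) :
    ∀ m s, 1 ≤ m → a (m + s) ≤ a m + 2 * s := by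
  intro m s hm
  induction s with
  | zero => simp
  | succ k ih =>
    have := a_gap ha1 hainc hbpos hbinc hcomp hsup (m + k) (by omega)
    have h2 : m + (k+1) = (m+k) + 1 := by omega
    rw [h2]
    omega

end Aux

section Main
variable {a b : ℕ → ℕ}

lemma lemU (ha1 : a 1 = 1) (hainc : StrictMono a)
    (hbpos : ∀ n, 1 ≤ n → 1 ≤ b n)
    (hbinc : ∀ m n, 1 ≤ m → m < n → b m < b n)
    (hcomp : ∀ k : ℕ, 1 ≤ k → ((∃ n, 1 ≤ n ∧ a n = k) ↔ ¬ ∃ n, 1 ≤ n ∧ b n = k))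
    (hsup : ∀ m n : ℕ, b m + b n ≤ b (m + n))
    (hsup' : ∀ m n : ℕ, 1 ≤ m → 2 ≤ n → b (m + 1) + b n ≤ b (m + n)) :
    ∀ i j, 1 ≤ i → 1 ≤ j → a (i + j - 1) ≤ a i + a j := by
  have amono : ∀ m n, 1 ≤ m → m < n → a m < a n := fun m n _ h => hainc h
  have apos : ∀ m, 1 ≤ m → 1 ≤ a m := fun m hm => le_trans hm hainc.le_apply
  have bA := le_cnt_iff a amono apos
  have bB := le_cnt_iff b hbinc hbpos
  have part := cnt_partition a b hcomp
  have cnt_a_a : ∀ i, 1 ≤ i → cnt a (a i) = i := by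
    intro i hi
    have h1 : i ≤ cnt a (a i) := (bA i (a i) hi).mp le_rfl
    have h2 : ¬ (i + 1 ≤ cnt a (a i)) := by
      intro h
      have := (bA (i+1) (a i) (by omega)).mpr h
      have := hainc (show i < i + 1 by omega)
      omega
    omega
  intro i j hi hj
  have haige : i ≤ a i := hainc.le_apply
  have hajge : j ≤ a j := hainc.le_apply
  set X := a i + a j with hX
  have hu : cnt b (a j) = a j - j := by
    have := part (a j); have := cnt_a_a j hj; omega
  have hbai : cnt b (a i) = a i - i := by
    have := part (a i); have := cnt_a_a i hi; omega
  have hmono2 : cnt b (a j) ≤ cnt b X := cnt_mono b (by omega)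
  set u := cnt b (a j) with hu'
  set w := cnt b X with hw'
  have hgoal : w ≤ (a i - i) + (a j - j) + 1 := by
    by_cases hv : w ≤ u + 1
    · omega
    · push_neg at hv
      have hbuv : b w ≤ X := (bB w X (by omega)).mpr le_rfl
      have hbu1 : a j < b (u+1) := by
        by_contra hc
        push_neg at hc
        have := (bB (u+1) (a j) (by omega)).mp hc
        omega
      by_cases hu0 : 1 ≤ u
      · have hs := hsup' u (w - u) hu0 (by omega)
        rw [show u + (w - u) = w by omega] at hs
        have : w - u ≤ cnt b (a i) := (bB (w-u) (a i) (by omega)).mp (by omega)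
        omega
      · have hb1aj : a j < b 1 := by
          have h0 : u = 0 := by omega
          simpa [h0] using hbu1
        have hs := hsup (w - 1) 1
        rw [show w - 1 + 1 = w by omega] at hs
        have : w - 1 ≤ cnt b (a i) := (bB (w-1) (a i) (by omega)).mp (by omega)
        omega
  have hfin : i + j - 1 ≤ cnt a X := by have := part X; omega
  exact (bA (i+j-1) X (by omega)).mpr hfin

lemma lemS2 (ha1 : a 1 = 1) (hainc : StrictMono a)
    (hbpos : ∀ n, 1 ≤ n → 1 ≤ b n)
    (hbinc : ∀ m n, 1 ≤ m → m < n → b m < b n)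
    (hcomp : ∀ k : ℕ, 1 ≤ k → ((∃ n, 1 ≤ n ∧ a n = k) ↔ ¬ ∃ n, 1 ≤ n ∧ b n = k))
    (hsup : ∀ m n : ℕ, b m + b n ≤ b (m + n))
    (hsup' : ∀ m n : ℕ, 1 ≤ m → 2 ≤ n → b (m + 1) + b n ≤ b (m + n)) :
    ∀ i j, 1 ≤ i → 1 ≤ j → a (i + j) ≤ a i + b j := by
  have amono : ∀ m n, 1 ≤ m → m < n → a m < a n := fun m n _ h => hainc h
  have apos : ∀ m, 1 ≤ m → 1 ≤ a m := fun m hm => le_trans hm hainc.le_apply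
  have bA := le_cnt_iff a amono apos
  have bB := le_cnt_iff b hbinc hbpos
  have part := cnt_partition a b hcomp
  have bmono' : ∀ m n, 1 ≤ m → m ≤ n → b m ≤ b n := by
    intro m n h1 h2
    rcases Nat.eq_or_lt_of_le h2 with h | h
    · exact h ▸ le_rfl
    · exact (hbinc m n h1 h).le
  have cnt_a_a : ∀ i, 1 ≤ i → cnt a (a i) = i := by
    intro i hi
    have h1 : i ≤ cnt a (a i) := (bA i (a i) hi).mp le_rfl
    have h2 : ¬ (i + 1 ≤ cnt a (a i)) := by
      intro h
      have := (bA (i+1) (a i) (by omega)).mpr h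
      have := hainc (show i < i + 1 by omega)
      omega
    omega
  intro i j hi hj
  have haige : i ≤ a i := hainc.le_apply
  have hbj2 : 2 * j ≤ b j := hb_lin ha1 hbpos hcomp hsup j hj
  set X := a i + b j with hX
  have hu : cnt b (a i) = a i - i := by
    have := part (a i); have := cnt_a_a i hi; omega
  have hmono2 : cnt b (a i) ≤ cnt b X := cnt_mono b (by omega)
  set u := cnt b (a i) with hu'
  set w := cnt b X with hw'
  have hgoal : w ≤ (a i - i) + (b j - j) := by
    by_cases hv : w ≤ u + 1
    · omega
    · push_neg at hv
      have hbuv : b w ≤ X := (bB w X (by omega)).mpr le_rfl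
      have hbu1 : a i < b (u+1) := by
        by_contra hc
        push_neg at hc
        have := (bB (u+1) (a i) (by omega)).mp hc
        omega
      by_cases hu0 : 1 ≤ u
      · have hs := hsup' u (w - u) hu0 (by omega)
        rw [show u + (w - u) = w by omega] at hs
        have hlt : w - u < j := by
          by_contra hc
          push_neg at hc
          have := bmono' j (w - u) hj hc
          omega
        omega
      · have hb1ai : a i < b 1 := by
          have h0 : u = 0 := by omega
          simpa [h0] using hbu1
        have hs := hsup (w - 1) 1
        rw [show w - 1 + 1 = w by omega] at hs
        have hlt : w - 1 < j := by
          by_contra hc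
          push_neg at hc
          have := bmono' j (w - 1) hj hc
          omega
        omega
  have hfin : i + j ≤ cnt a X := by have := part X; omega
  exact (bA (i+j) X (by omega)).mpr hfin



end Main

section L1
variable {a b : ℕ → ℕ}
def AxMove (a b : ℕ → ℕ) (d1 d2 : ℕ) : Prop :=
  ∃ n, 1 ≤ n ∧ ((a n = d1 ∧ b n ≤ d2) ∨ (b n = d1 ∧ a n ≤ d2) ∨
    (a n = d2 ∧ b n ≤ d1) ∨ (b n = d2 ∧ a n ≤ d1))

lemma AxMove.swap {a b : ℕ → ℕ} {d1 d2 : ℕ} (h : AxMove a b d1 d2) : AxMove a b d2 d1 := by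
  obtain ⟨n, hn, h⟩ := h
  exact ⟨n, hn, by tauto⟩

lemma L1case1 (ha1 : a 1 = 1) (hainc : StrictMono a)
    (hbpos : ∀ n, 1 ≤ n → 1 ≤ b n)
    (hbinc : ∀ m n, 1 ≤ m → m < n → b m < b n)
    (hcomp : ∀ k : ℕ, 1 ≤ k → ((∃ n, 1 ≤ n ∧ a n = k) ↔ ¬ ∃ n, 1 ≤ n ∧ b n = k))
    (hsup : ∀ m n : ℕ, b m + b n ≤ b (m + n))
    (hsup' : ∀ m n : ℕ, 1 ≤ m → 2 ≤ n → b (m + 1) + b n ≤ b (m + n)) :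
    ∀ m N, 1 ≤ m → m < N → AxMove a b (a N - a m) (b N - b m) := by
  intro m N hm hmN
  have bmono' : ∀ i j, 1 ≤ i → i ≤ j → b i ≤ b j := by
    intro i j h1 h2
    rcases Nat.eq_or_lt_of_le h2 with h | h
    · exact h ▸ le_rfl
    · exact (hbinc i j h1 h).le
  have hamN : a m < a N := hainc hmN
  have hbmN : b m < b N := hbinc m N hm hmN
  rcases val_class hcomp (a N - a m) (by omega) with ⟨k, hk1, hk2⟩ | ⟨k, hk1, hk2⟩
  · -- a k = a N - a m
    have hU := lemU ha1 hainc hbpos hbinc hcomp hsup hsup' m (N - m + 1) hm (by omega)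
    rw [show m + (N - m + 1) - 1 = N by omega] at hU
    have hkle : k ≤ N - m + 1 := by
      by_contra hc
      push_neg at hc
      have : a (N - m + 1) < a k := hainc (by omega)
      omega
    have hbk : b m + b k ≤ b N := by
      rcases Nat.lt_or_ge k (N - m + 1) with h | h
      · have h1 := hsup m k
        have h2 : b (m + k) ≤ b N := bmono' (m + k) N (by omega) (by omega)
        omega
      · have hk' : k = N - m + 1 := by omega
        have hm2 : 2 ≤ m := by
          by_contra hc
          have hm1 : m = 1 := by omega
          have hkN : k = N := by omega
          rw [hkN, hm1, ha1] at hk2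
          have : 1 ≤ a N := by
            have : a 1 ≤ a N := hainc.monotone (by omega)
            omega
          omega
        have hs := hsup' (m - 1) k (by omega) (by omega)
        rw [show (m - 1) + 1 = m by omega, show m - 1 + k = N by omega] at hs
        exact hs
    exact ⟨k, hk1, Or.inl ⟨hk2, by omega⟩⟩
  · -- b k = a N - a m
    have h1 : a k < b k := a_lt_b ha1 hainc hbpos hbinc hcomp hsup k hk1
    have h2 : a N ≤ a m + 2 * (N - m) := by
      have := a_add_le ha1 hainc hbpos hbinc hcomp hsup m (N - m) hm
      rw [show m + (N - m) = N by omega] at this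
      exact this
    have h3 : 2 * (N - m) ≤ b (N - m) := hb_lin ha1 hbpos hcomp hsup (N - m) (by omega)
    have h4 : b m + b (N - m) ≤ b N := by
      have := hsup m (N - m)
      rw [show m + (N - m) = N by omega] at this
      exact this
    exact ⟨k, hk1, Or.inr (Or.inl ⟨hk2, by omega⟩)⟩

lemma L1case2 (ha1 : a 1 = 1) (hainc : StrictMono a)
    (hbpos : ∀ n, 1 ≤ n → 1 ≤ b n)
    (hbinc : ∀ m n, 1 ≤ m → m < n → b m < b n)
    (hcomp : ∀ k : ℕ, 1 ≤ k → ((∃ n, 1 ≤ n ∧ a n = k) ↔ ¬ ∃ n, 1 ≤ n ∧ b n = k))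
    (hsup : ∀ m n : ℕ, b m + b n ≤ b (m + n))
    (hsup' : ∀ m n : ℕ, 1 ≤ m → 2 ≤ n → b (m + 1) + b n ≤ b (m + n)) :
    ∀ m N, 1 ≤ m → 1 ≤ N → b m < a N → AxMove a b (a N - b m) (b N - a m) := by
  intro m N hm hN hbmaN
  have bmono' : ∀ i j, 1 ≤ i → i ≤ j → b i ≤ b j := by
    intro i j h1 h2
    rcases Nat.eq_or_lt_of_le h2 with h | h
    · exact h ▸ le_rfl
    · exact (hbinc i j h1 h).le
  have habN : a N < b N := a_lt_b ha1 hainc hbpos hbinc hcomp hsup N hN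
  have habm : a m < b m := a_lt_b ha1 hainc hbpos hbinc hcomp hsup m hm
  have hmN : m < N := by
    by_contra hc
    push_neg at hc
    have : b N ≤ b m := bmono' N m hN hc
    omega
  rcases val_class hcomp (a N - b m) (by omega) with ⟨k, hk1, hk2⟩ | ⟨k, hk1, hk2⟩
  · -- a k = a N - b m
    have hS := lemS2 ha1 hainc hbpos hbinc hcomp hsup hsup' (N - m) m (by omega) hm
    rw [show N - m + m = N by omega] at hS
    have hkle : k ≤ N - m := by
      by_contra hc
      push_neg at hc
      have : a (N - m) < a k := hainc (by omega)
      omega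
    have hbk : b k + b m ≤ b N := by
      have h1 := hsup k m
      have h2 : b (k + m) ≤ b N := bmono' (k + m) N (by omega) (by omega)
      omega
    exact ⟨k, hk1, Or.inl ⟨hk2, by omega⟩⟩
  · -- b k = a N - b m
    have h1 : a k < b k := a_lt_b ha1 hainc hbpos hbinc hcomp hsup k hk1
    exact ⟨k, hk1, Or.inr (Or.inl ⟨hk2, by omega⟩)⟩



end L1


theorem stmt_18 (a b : ℕ → ℕ)
    (ha0 : a 0 = 0) (hb0 : b 0 = 0) (ha1 : a 1 = 1)
    (hainc : StrictMono a)
    (hbpos : ∀ n, 1 ≤ n → 1 ≤ b n)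
    (hbinc : ∀ m n, 1 ≤ m → m < n → b m < b n)
    (hcomp : ∀ k : ℕ, 1 ≤ k → ((∃ n, 1 ≤ n ∧ a n = k) ↔ ¬ ∃ n, 1 ≤ n ∧ b n = k))
    (hsup : ∀ m n : ℕ, b m + b n ≤ b (m + n))
    (hb2 : 2 * b 1 ≤ b 2)
    (hsup' : ∀ m n : ℕ, 1 ≤ m → 2 ≤ n → b (m + 1) + b n ≤ b (m + n)) :
    ∀ p : ℕ × ℕ,
      PPos2 {q | PPos2 {r | ∃ n, 1 ≤ n ∧ (r = (a n, b n) ∨ r = (b n, a n))} q ∧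
          q ≠ (0, 0)} p
        ↔ ∃ n : ℕ, p = (a n, b n) ∨ p = (b n, a n) := by
  set M : Set (ℕ × ℕ) := {r | ∃ n, 1 ≤ n ∧ (r = (a n, b n) ∨ r = (b n, a n))} with hMdef
  set Mstar : Set (ℕ × ℕ) := {q | PPos2 M q ∧ q ≠ (0, 0)} with hMstardef
  have apos : ∀ n, 1 ≤ n → 1 ≤ a n := by
    intro n hn
    have : a 1 ≤ a n := hainc.monotone hn
    omega
  have hab := a_lt_b ha1 hainc hbpos hbinc hcomp hsup
  -- axis positions are P-positions of G
  have Paxis : ∀ x : ℕ × ℕ, (x.1 = 0 ∨ x.2 = 0) → PPos2 M x := by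
    intro x hx
    rw [PPos2_iff]
    intro r hrM hne h1 h2
    exfalso
    obtain ⟨n, hn, hc⟩ := hrM
    have hr1 : 1 ≤ r.1 ∧ 1 ≤ r.2 := by
      rcases hc with rfl | rfl
      · exact ⟨apos n hn, hbpos n hn⟩
      · exact ⟨hbpos n hn, apos n hn⟩
    rcases hx with h | h <;> omega
  -- positions with a move to the axis are N-positions of G
  have NfromAx : ∀ d1 d2 : ℕ, 1 ≤ d1 → 1 ≤ d2 → AxMove a b d1 d2 →
      ¬ PPos2 M (d1, d2) := by
    intro d1 d2 h1 h2 hAx hP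
    obtain ⟨n, hn, hcl⟩ := hAx
    have han : 1 ≤ a n := apos n hn
    have hbn : 1 ≤ b n := hbpos n hn
    rcases hcl with ⟨he, hl⟩ | ⟨he, hl⟩ | ⟨he, hl⟩ | ⟨he, hl⟩
    · exact (PPos2_iff M (d1, d2)).mp hP (a n, b n) ⟨n, hn, Or.inl rfl⟩
        (by simp only [ne_eq, Prod.mk.injEq]; omega) (by simpa using he.le) (by simpa using hl)
        (Paxis _ (Or.inl (by simp; omega)))
    · exact (PPos2_iff M (d1, d2)).mp hP (b n, a n) ⟨n, hn, Or.inr rfl⟩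
        (by simp only [ne_eq, Prod.mk.injEq]; omega) (by simpa using he.le) (by simpa using hl)
        (Paxis _ (Or.inl (by simp; omega)))
    · exact (PPos2_iff M (d1, d2)).mp hP (b n, a n) ⟨n, hn, Or.inr rfl⟩
        (by simp only [ne_eq, Prod.mk.injEq]; omega) (by simpa using hl) (by simpa using he.le)
        (Paxis _ (Or.inr (by simp; omega)))
    · exact (PPos2_iff M (d1, d2)).mp hP (a n, b n) ⟨n, hn, Or.inl rfl⟩
        (by simp only [ne_eq, Prod.mk.injEq]; omega) (by simpa using hl) (by simpa using he.le)
        (Paxis _ (Or.inr (by simp; omega)))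
  -- nonzero elements of A are N-positions of G
  have NofA : ∀ n, 1 ≤ n → ¬ PPos2 M (a n, b n) ∧ ¬ PPos2 M (b n, a n) := by
    intro n hn
    have han : 1 ≤ a n := apos n hn
    have hbn : 1 ≤ b n := hbpos n hn
    constructor
    · intro hP
      exact (PPos2_iff M _).mp hP (a n, b n) ⟨n, hn, Or.inl rfl⟩
        (by simp only [ne_eq, Prod.mk.injEq]; omega) le_rfl le_rfl
        (by simpa using PPos2_zero M)
    · intro hP
      exact (PPos2_iff M _).mp hP (b n, a n) ⟨n, hn, Or.inr rfl⟩
        (by simp only [ne_eq, Prod.mk.injEq]; omega) le_rfl le_rfl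
        (by simpa using PPos2_zero M)
  -- main strong induction
  have main : ∀ K : ℕ, ∀ p : ℕ × ℕ, p.1 + p.2 ≤ K →
      (PPos2 Mstar p ↔ ∃ n : ℕ, p = (a n, b n) ∨ p = (b n, a n)) := by
    intro K
    induction K with
    | zero =>
      intro p hp
      have hp0 : p = (0, 0) := Prod.ext (by omega) (by omega)
      subst hp0
      constructor
      · intro _
        exact ⟨0, Or.inl (by simp [ha0, hb0])⟩
      · intro _
        exact PPos2_zero Mstar
    | succ K ih =>
      intro p hp
      rcases Nat.lt_or_ge (p.1 + p.2) (K + 1) with hlt | hge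
      · exact ih p (by omega)
      constructor
      · -- forward
        intro hP
        by_contra hpA
        push_neg at hpA
        have hpne : p ≠ (0, 0) := by
          have := (hpA 0).1
          rw [ha0, hb0] at this
          exact this
        by_cases hPG : PPos2 M p
        · have h6 := (PPos2_iff Mstar p).mp hP p ⟨hPG, hpne⟩ hpne le_rfl le_rfl
          exact h6 (by simpa using PPos2_zero Mstar)
        · rw [PPos2_iff] at hPG
          push_neg at hPG
          obtain ⟨r, hrM, hrne, h1, h2, hPr⟩ := hPG
          have hrne' : 1 ≤ r.1 ∨ 1 ≤ r.2 := by
            rcases Nat.eq_zero_or_pos r.1 with h | h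
            · rcases Nat.eq_zero_or_pos r.2 with h' | h'
              · exact absurd (Prod.ext h h') hrne
              · exact Or.inr h'
            · exact Or.inl h
          have hsne : ((p.1 - r.1 : ℕ), (p.2 - r.2 : ℕ)) ≠ ((0 : ℕ), (0 : ℕ)) := by
            intro h0
            rw [Prod.mk.injEq] at h0
            obtain ⟨n, hn, hc⟩ := hrM
            have : p = r := Prod.ext (by omega) (by omega)
            rcases hc with hc | hc
            · exact (hpA n).1 (this.trans hc)
            · exact (hpA n).2 (this.trans hc)
          have h5 := (PPos2_iff Mstar p).mp hP _ ⟨hPr, hsne⟩ hsne (by simp) (by simp)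
          apply h5
          have hrw : (p.1 - (p.1 - r.1), p.2 - (p.2 - r.2)) = r := Prod.ext (by simp; omega) (by simp; omega)
          rw [hrw]
          refine (ih r ?_).mpr ?_
          · have h0 : ¬(p.1 - r.1 = 0 ∧ p.2 - r.2 = 0) := by
              intro ⟨u, v⟩
              exact hsne (by rw [Prod.mk.injEq]; exact ⟨u, v⟩)
            omega
          · obtain ⟨n, hn, hc⟩ := hrM
            exact ⟨n, hc⟩
      · -- backward
        rintro ⟨n, hpn⟩
        rw [PPos2_iff]
        intro r hr hrne h1 h2 hPstar
        obtain ⟨hrP, _⟩ := hr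
        have hrne' : 1 ≤ r.1 ∨ 1 ≤ r.2 := by
          rcases Nat.eq_zero_or_pos r.1 with h | h
          · rcases Nat.eq_zero_or_pos r.2 with h' | h'
            · exact absurd (Prod.ext h h') hrne
            · exact Or.inr h'
          · exact Or.inl h
        have hsz : (p.1 - r.1) + (p.2 - r.2) ≤ K := by omega
        obtain ⟨m, hqm⟩ := (ih _ hsz).mp hPstar
        -- degenerate: n = 0 (p = (0,0))
        rcases Nat.eq_zero_or_pos n with rfl | hn
        · rw [ha0, hb0] at hpn
          have hp0 : p = (0, 0) := by rcases hpn with h | h <;> exact h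
          rw [hp0] at h1 h2
          simp at h1 h2
          exact hrne (Prod.ext h1 h2)
        -- degenerate: m = 0 (r = p, but p is an N-position of G)
        rcases Nat.eq_zero_or_pos m with rfl | hm
        · rw [ha0, hb0] at hqm
          have hq0 : p.1 - r.1 = 0 ∧ p.2 - r.2 = 0 := by
            rcases hqm with h | h <;>
              (rw [Prod.mk.injEq] at h; exact h)
          have hrp : r = p := Prod.ext (by omega) (by omega)
          rw [hrp] at hrP
          rcases hpn with h | h <;> rw [h] at hrP
          · exact (NofA n hn).1 hrP
          · exact (NofA n hn).2 hrP
        -- main case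
        exfalso
        have hq1 : p.1 - r.1 = (if True then 0 else 0) ∨ True := Or.inr trivial
        clear hq1
        -- extract coordinates
        rcases hpn with hpn | hpn <;> rcases hqm with hqm | hqm <;>
          rw [Prod.ext_iff] at hpn hqm
        · -- p = (a n, b n), q = (a m, b m)
          have ham : a m < a n := by
            rcases Nat.lt_or_ge (a m) (a n) with h | h
            · exact h
            · exfalso
              have hmn : m = n := hainc.injective (by omega)
              subst hmn
              exact hrne (Prod.ext (by omega) (by omega))
          have hmn : m < n := by
            by_contra hc
            push_neg at hc
            have : a n ≤ a m := hainc.monotone hc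
            omega
          have hbm : b m < b n := hbinc m n hm hmn
          have hAx := L1case1 ha1 hainc hbpos hbinc hcomp hsup hsup' m n hm hmn
          have hr : r = (a n - a m, b n - b m) := Prod.ext (by omega) (by omega)
          rw [hr] at hrP
          exact NfromAx _ _ (by omega) (by omega) hAx hrP
        · -- p = (a n, b n), q = (b m, a m)
          have hne2 : b m ≠ a n := by
            intro h
            exact (hcomp (a n) (apos n hn)).mp ⟨n, hn, rfl⟩ ⟨m, hm, h⟩
          have hbm : b m < a n := by omega
          have hAx := L1case2 ha1 hainc hbpos hbinc hcomp hsup hsup' m n hm hn hbm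
          have habm := hab m hm
          have habn := hab n hn
          have hr : r = (a n - b m, b n - a m) := Prod.ext (by omega) (by omega)
          rw [hr] at hrP
          exact NfromAx _ _ (by omega) (by omega) hAx hrP
        · -- p = (b n, a n), q = (a m, b m)
          have hne2 : b m ≠ a n := by
            intro h
            exact (hcomp (a n) (apos n hn)).mp ⟨n, hn, rfl⟩ ⟨m, hm, h⟩
          have hbm : b m < a n := by omega
          have hAx := (L1case2 ha1 hainc hbpos hbinc hcomp hsup hsup' m n hm hn hbm).swap
          have habm := hab m hm
          have habn := hab n hn
          have hr : r = (b n - a m, a n - b m) := Prod.ext (by omega) (by omega)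
          rw [hr] at hrP
          exact NfromAx _ _ (by omega) (by omega) hAx hrP
        · -- p = (b n, a n), q = (b m, a m)
          have hbm : b m < b n := by
            rcases Nat.lt_or_ge (b m) (b n) with h | h
            · exact h
            · exfalso
              have hmn : m = n := by
                rcases Nat.lt_trichotomy m n with h' | h' | h'
                · have := hbinc m n hm h'; omega
                · exact h'
                · have := hbinc n m hn h'; omega
              subst hmn
              exact hrne (Prod.ext (by omega) (by omega))
          have hmn : m < n := by
            by_contra hc
            push_neg at hc
            rcases Nat.eq_or_lt_of_le hc with h | h
            · subst h; omega
            · have := hbinc n m hn h; omega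
          have ham : a m < a n := hainc hmn
          have hAx := (L1case1 ha1 hainc hbpos hbinc hcomp hsup hsup' m n hm hmn).swap
          have hr : r = (b n - b m, a n - a m) := Prod.ext (by omega) (by omega)
          rw [hr] at hrP
          exact NfromAx _ _ (by omega) (by omega) hAx hrP
  intro p
  exact main (p.1 + p.2) p le_rfl
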